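/- arXiv:2410.17873 — 5 statements merged into one kernel-verified Lean document; each statement's English description precedes it below -/
import Mathlib

section
/- For all n, d ≥ 1 with n even and n < 2^d, there is no full solution to the (n,d)-queens problem, i.e. |Q_max(n,d)| < n^(d-1). -/
/-- A square `q` lies on the `(n,d)`-board: all coordinates between `1` and `n`. -/
def onBoard (n d : ℕ) (q : Fin d → ℤ) : Prop := ∀ i, 1 ≤ q i ∧ q i ≤ (n : ℤ)

/-- Queen `q1` attacks queen `q2`: there are `m : ℤ` and a nonzero `ε ∈ {-1,0,1}^d`
with `q1 i = ε i * m + q2 i` for all `i`. -/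
def attacks {d : ℕ} (q1 q2 : Fin d → ℤ) : Prop :=
  ∃ (m : ℤ) (ε : Fin d → ℤ), (∀ i, ε i = -1 ∨ ε i = 0 ∨ ε i = 1) ∧ ε ≠ 0 ∧
    ∀ i, q1 i = ε i * m + q2 i

/-- A set of queens is mutually non-attacking. -/
def nonAttacking {d : ℕ} (Q : Set (Fin d → ℤ)) : Prop :=
  ∀ q1 ∈ Q, ∀ q2 ∈ Q, q1 ≠ q2 → ¬ attacks q1 q2

/-- `maxQueens n d = |Q_max(n,d)|`, the maximum cardinality of a set of
mutually non-attacking queens on the `(n,d)`-board. -/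
noncomputable def maxQueens (n d : ℕ) : ℕ :=
  sSup {k | ∃ Q : Finset (Fin d → ℤ), Q.card = k ∧ (∀ q ∈ Q, onBoard n d q) ∧
    nonAttacking (Q : Set (Fin d → ℤ))}

/-!
Cut the `(2k,d)`-board into the `k^d` cubes `{2a-1, 2a}^d`. Any two distinct squares of one
cube differ by at most `1` in every coordinate, so a queen on one attacks the other with step
`m = 1`; hence a non-attacking set meets each cube at most once and has at most
`k^d = n^d / 2^d` queens, which is less than `n^(d-1)` exactly when `n < 2^d`.
-/

theorem attacks_of_abs_sub_le_one {d : ℕ} {q1 q2 : Fin d → ℤ} (hne : q1 ≠ q2)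
    (hclose : ∀ i, |q1 i - q2 i| ≤ 1) : attacks q1 q2 := by
  refine ⟨1, q1 - q2, fun i => ?_, sub_ne_zero.mpr hne, fun i => by simp⟩
  have := abs_le.mp (hclose i)
  simp only [Pi.sub_apply]
  omega

/-- The cube `{2a-1, 2a}^d` containing `q` is indexed by `a = pairCube q`. -/
def pairCube {d : ℕ} (q : Fin d → ℤ) : Fin d → ℤ := fun i => (q i + 1) / 2

theorem injOn_pairCube {d : ℕ} {Q : Set (Fin d → ℤ)} (hQ : nonAttacking Q) :
    Set.InjOn pairCube Q := by
  intro q1 h1 q2 h2 hcube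
  by_contra hne
  refine hQ q1 h1 q2 h2 hne (attacks_of_abs_sub_le_one hne fun i => ?_)
  have := congrFun hcube i
  simp only [pairCube] at this
  rw [abs_le]
  omega

theorem pairCube_mem_piFinset {k d : ℕ} {q : Fin d → ℤ} (hq : onBoard (2 * k) d q) :
    pairCube q ∈ Fintype.piFinset fun _ : Fin d => Finset.Icc (1 : ℤ) k := by
  rw [Fintype.mem_piFinset]
  intro i
  have := hq i
  simp only [pairCube, Finset.mem_Icc]
  push_cast at this
  omega

theorem card_le_of_nonAttacking {k d : ℕ} {Q : Finset (Fin d → ℤ)}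
    (hboard : ∀ q ∈ Q, onBoard (2 * k) d q) (hQ : nonAttacking (Q : Set (Fin d → ℤ))) :
    Q.card ≤ k ^ d :=
  calc Q.card = (Q.image pairCube).card := (Finset.card_image_of_injOn (injOn_pairCube hQ)).symm
    _ ≤ (Fintype.piFinset fun _ : Fin d => Finset.Icc (1 : ℤ) k).card := by
        refine Finset.card_le_card fun a ha => ?_
        obtain ⟨q, hq, rfl⟩ := Finset.mem_image.mp ha
        exact pairCube_mem_piFinset (hboard q hq)
    _ = k ^ d := by simp

theorem maxQueens_two_mul_le (k d : ℕ) : maxQueens (2 * k) d ≤ k ^ d := by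
  refine csSup_le' ?_
  rintro _ ⟨Q, rfl, hboard, hQ⟩
  exact card_le_of_nonAttacking hboard hQ

theorem pow_lt_two_mul_pow_pred {k d : ℕ} (hk : 0 < k) (hlt : 2 * k < 2 ^ d) :
    k ^ d < (2 * k) ^ (d - 1) := by
  obtain ⟨e, rfl⟩ : ∃ e, d = e + 1 := by
    refine Nat.exists_eq_add_one.mpr (Nat.pos_of_ne_zero ?_)
    rintro rfl
    omega
  have key : 2 ^ (e + 1) * k ^ (e + 1) < 2 ^ (e + 1) * (2 * k) ^ e :=
    calc 2 ^ (e + 1) * k ^ (e + 1) = 2 * k * (2 * k) ^ e := by ring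
      _ < 2 ^ (e + 1) * (2 * k) ^ e := by gcongr
  simpa using Nat.lt_of_mul_lt_mul_left key

theorem no_full_solution_of_even_general (n d : ℕ) (hn : 1 ≤ n)
    (heven : Even n) (hlt : n < 2 ^ d) :
    maxQueens n d < n ^ (d - 1) := by
  obtain ⟨k, rfl⟩ := heven
  rw [← two_mul] at hlt ⊢
  exact (maxQueens_two_mul_le k d).trans_lt (pow_lt_two_mul_pow_pred (by omega) hlt)

/-- if `n` is even and `n < 2^d`, there is no full solution. -/
theorem no_full_solution_of_even (n d : ℕ) (hn : 1 ≤ n) (hd : 1 ≤ d)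
    (heven : Even n) (hlt : n < 2 ^ d) :
    maxQueens n d < n ^ (d - 1) :=
  no_full_solution_of_even_general n d hn heven hlt
end

section
/- Cube-plus-center clique validity (even h): fix an even integer h ≥ 2 and base square s with s_i + h ≤ n for all i. Then the 2^d + 1 squares consisting of the hypercube vertices {(s_1 + a_1·h, ..., s_d + a_d·h) : a ∈ {0,1}^d} together with the center (s_1 + h/2, ..., s_d + h/2) are pairwise mutually attacking; hence any non-attacking set contains at most one of them. -/
/-- cube-plus-center clique validity for even `h`. -/
theorem cube_center_clique (n d h : ℕ) (hd : 1 ≤ d) (hh : 2 ≤ h) (heven : Even h)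
    (s : Fin d → ℤ) (hs : ∀ i, 1 ≤ s i ∧ s i + (h : ℤ) ≤ (n : ℤ))
    (P : Set (Fin d → ℤ))
    (hP : P = {q | (∃ a : Fin d → Bool, ∀ i, q i = s i + (if a i then (h : ℤ) else 0)) ∨
      (∀ i, q i = s i + (h : ℤ) / 2)}) :
    (∀ p ∈ P, ∀ q ∈ P, p ≠ q → attacks p q) ∧
    (∀ Q : Set (Fin d → ℤ), nonAttacking Q →
      ∀ p ∈ P ∩ Q, ∀ q ∈ P ∩ Q, p = q) := by
  obtain ⟨t, ht⟩ := heven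
  have ht' : (h : ℤ) = (t : ℤ) + t := by exact_mod_cast congrArg (Nat.cast : ℕ → ℤ) ht
  have hdiv : (h : ℤ) / 2 = (t : ℤ) := by omega
  have ht1 : 1 ≤ (t : ℤ) := by omega
  have key : ∀ p ∈ P, ∀ q ∈ P, p ≠ q → attacks p q := by
    intro p hp q hq hne
    rw [hP] at hp hq
    rcases hp with ⟨a, hpa⟩ | hpc
    · rcases hq with ⟨b, hqb⟩ | hqc
      · -- vertex vs vertex
        obtain ⟨i0, hi0⟩ : ∃ i, p i ≠ q i := by
          by_contra hcon; push_neg at hcon; exact hne (funext hcon)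
        refine ⟨(h : ℤ), fun i => (if a i then 1 else 0) - (if b i then 1 else 0), ?_, ?_, ?_⟩
        · intro i
          by_cases hx : a i = true <;> by_cases hy : b i = true <;> simp [hx, hy]
        · intro h0
          have h1 := congrFun h0 i0
          simp only [Pi.zero_apply, sub_eq_zero] at h1
          apply hi0
          rw [hpa i0, hqb i0]
          by_cases hx : a i0 = true <;> by_cases hy : b i0 = true <;>
            simp [hx, hy] at h1 ⊢
        · intro i
          rw [hpa i, hqb i]
          by_cases hx : a i = true <;> by_cases hy : b i = true <;>
            simp [hx, hy] <;> ring
      · -- vertex vs center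
        refine ⟨(t : ℤ), fun i => if a i then 1 else -1, ?_, ?_, ?_⟩
        · intro i; by_cases hx : a i = true <;> simp [hx]
        · intro h0
          have h1 := congrFun h0 ⟨0, hd⟩
          simp only [Pi.zero_apply] at h1
          by_cases hx : a ⟨0, hd⟩ = true <;> simp [hx] at h1
        · intro i
          rw [hpa i, hqc i, hdiv]
          by_cases hx : a i = true <;> simp [hx] <;> omega
    · rcases hq with ⟨b, hqb⟩ | hqc
      · -- center vs vertex
        refine ⟨(t : ℤ), fun i => if b i then -1 else 1, ?_, ?_, ?_⟩
        · intro i; by_cases hx : b i = true <;> simp [hx]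
        · intro h0
          have h1 := congrFun h0 ⟨0, hd⟩
          simp only [Pi.zero_apply] at h1
          by_cases hx : b ⟨0, hd⟩ = true <;> simp [hx] at h1
        · intro i
          rw [hpc i, hqb i, hdiv]
          by_cases hx : b i = true <;> simp [hx] <;> omega
      · exact absurd (funext fun i => (hpc i).trans (hqc i).symm) hne
  refine ⟨key, ?_⟩
  intro Q hQ p hp q hq
  by_contra hne
  exact hQ p hp.2 q hq.2 hne (key p hp.1 q hq.1 hne)
end

section
/- Star clique validity: fix an integer h ≥ 1 and a square s = (s_1,...,s_d) with 1 ≤ s_i - h and s_i + h ≤ n for all i. Then the 2d + 1 squares consisting of s together with s ± h·e_i for each coordinate direction e_i are pairwise mutually attacking; hence any set of mutually non-attacking queens contains at most one of them. -/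
/-- One-coordinate attack helper. -/
lemma attacks_one {d : ℕ} (p q : Fin d → ℤ) (i : Fin d) (a m : ℤ)
    (ha : a = -1 ∨ a = 0 ∨ a = 1) (ha0 : a ≠ 0)
    (heq : ∀ k, p k = (Function.update (0 : Fin d → ℤ) i a) k * m + q k) :
    attacks p q := by
  refine ⟨m, Function.update 0 i a, ?_, ?_, heq⟩
  · intro k
    by_cases hk : k = i <;> simp [Function.update_apply, hk, ha]
  · intro h0
    have := congrFun h0 i
    simp [ha0] at this

/-- Two-coordinate attack helper. -/
lemma attacks_two {d : ℕ} (p q : Fin d → ℤ) (i j : Fin d) (hij : i ≠ j) (a b m : ℤ)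
    (ha : a = -1 ∨ a = 0 ∨ a = 1) (hb : b = -1 ∨ b = 0 ∨ b = 1) (ha0 : a ≠ 0)
    (heq : ∀ k, p k = (Function.update (Function.update (0 : Fin d → ℤ) i a) j b) k * m + q k) :
    attacks p q := by
  refine ⟨m, _, ?_, ?_, heq⟩
  · intro k
    by_cases hk : k = i <;> by_cases hk2 : k = j <;>
      simp_all [Function.update_apply, ha, hb]
  · intro h0
    have := congrFun h0 i
    simp [Function.update_apply, hij, ha0] at this

/-- star clique validity. -/
theorem star_clique (n d h : ℕ) (hd : 1 ≤ d) (hh : 1 ≤ h)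
    (s : Fin d → ℤ) (hs : ∀ i, 1 ≤ s i - (h : ℤ) ∧ s i + (h : ℤ) ≤ (n : ℤ))
    (P : Set (Fin d → ℤ))
    (hP : P = {q | q = s ∨ ∃ i : Fin d,
      q = Function.update s i (s i + (h : ℤ)) ∨ q = Function.update s i (s i - (h : ℤ))}) :
    (∀ p ∈ P, ∀ q ∈ P, p ≠ q → attacks p q) ∧
    (∀ Q : Set (Fin d → ℤ), nonAttacking Q →
      ∀ p ∈ P ∩ Q, ∀ q ∈ P ∩ Q, p = q) := by
  subst hP
  have main : ∀ p ∈ {q | q = s ∨ ∃ i : Fin d,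
      q = Function.update s i (s i + (h : ℤ)) ∨ q = Function.update s i (s i - (h : ℤ))},
      ∀ q ∈ {q | q = s ∨ ∃ i : Fin d,
      q = Function.update s i (s i + (h : ℤ)) ∨ q = Function.update s i (s i - (h : ℤ))},
      p ≠ q → attacks p q := by
    rintro p (rfl | ⟨i, rfl | rfl⟩) q (rfl | ⟨j, rfl | rfl⟩) hne
    · exact absurd rfl hne
    · exact attacks_one _ _ j 1 (-(h : ℤ)) (by tauto) one_ne_zero (fun k => by
        by_cases hk : k = j <;> simp [Function.update_apply, hk] <;> ring)
    · exact attacks_one _ _ j 1 (h : ℤ) (by tauto) one_ne_zero (fun k => by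
        by_cases hk : k = j <;> simp [Function.update_apply, hk] <;> ring)
    · exact attacks_one _ _ i 1 (h : ℤ) (by tauto) one_ne_zero (fun k => by
        by_cases hk : k = i <;> simp [Function.update_apply, hk] <;> ring)
    · rcases eq_or_ne i j with rfl | hij
      · exact absurd rfl hne
      · exact attacks_two _ _ i j hij 1 (-1) (h : ℤ) (by tauto) (by tauto) one_ne_zero
          (fun k => by
            by_cases hk : k = i <;> by_cases hk2 : k = j <;>
              simp [Function.update_apply, hk, hk2, hij, hij.symm] <;> ring)
    · rcases eq_or_ne i j with rfl | hij
      · exact attacks_one _ _ i 1 (2 * (h : ℤ)) (by tauto) one_ne_zero (fun k => by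
          by_cases hk : k = i <;> simp [Function.update_apply, hk] <;> ring)
      · exact attacks_two _ _ i j hij 1 1 (h : ℤ) (by tauto) (by tauto) one_ne_zero
          (fun k => by
            by_cases hk : k = i <;> by_cases hk2 : k = j <;>
              simp [Function.update_apply, hk, hk2, hij, hij.symm] <;> ring)
    · exact attacks_one _ _ i 1 (-(h : ℤ)) (by tauto) one_ne_zero (fun k => by
        by_cases hk : k = i <;> simp [Function.update_apply, hk] <;> ring)
    · rcases eq_or_ne i j with rfl | hij
      · exact attacks_one _ _ i 1 (-(2 * (h : ℤ))) (by tauto) one_ne_zero (fun k => by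
          by_cases hk : k = i <;> simp [Function.update_apply, hk] <;> ring)
      · exact attacks_two _ _ i j hij 1 1 (-(h : ℤ)) (by tauto) (by tauto) one_ne_zero
          (fun k => by
            by_cases hk : k = i <;> by_cases hk2 : k = j <;>
              simp [Function.update_apply, hk, hk2, hij, hij.symm] <;> ring)
    · rcases eq_or_ne i j with rfl | hij
      · exact absurd rfl hne
      · exact attacks_two _ _ i j hij 1 (-1) (-(h : ℤ)) (by tauto) (by tauto) one_ne_zero
          (fun k => by
            by_cases hk : k = i <;> by_cases hk2 : k = j <;>
              simp [Function.update_apply, hk, hk2, hij, hij.symm] <;> ring)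
  refine ⟨main, ?_⟩
  intro Q hQ p hp q hq
  by_contra hne
  exact hQ p hp.2 q hq.2 hne (main p hp.1 q hq.1 hne)
end

section
/- Modular construction (Klarner/van Lint): if gcd(n, (2^d - 1)!) = 1, then there exists a set of n^(d-1) mutually non-attacking queens on the (n,d)-board. -/
lemma two_pow_sum (k : ℕ) : ∑ i ∈ Finset.range k, (2:ℤ)^i = 2^k - 1 := by
  induction k with
  | zero => simp
  | succ k ih => rw [Finset.sum_range_succ, ih]; ring

lemma eps_zero : ∀ {d : ℕ} (ε : Fin d → ℤ), (∀ i, ε i = -1 ∨ ε i = 0 ∨ ε i = 1) →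
    (∑ i, ε i * 2^(i:ℕ)) = 0 → ε = 0 := by
  intro d
  induction d with
  | zero => intro ε _ _; funext i; exact i.elim0
  | succ d ih =>
    intro ε hε hs
    rw [Fin.sum_univ_succ] at hs
    have h2 : ∑ i : Fin d, ε i.succ * 2^((i.succ : Fin (d+1)) : ℕ)
        = 2 * ∑ i : Fin d, ε i.succ * 2^(i:ℕ) := by
      rw [Finset.mul_sum]
      refine Finset.sum_congr rfl fun i _ => ?_
      rw [Fin.val_succ]; ring
    rw [h2] at hs
    simp only [Fin.val_zero, pow_zero, mul_one] at hs
    have h0 : ε 0 = 0 := by rcases hε 0 with h|h|h <;> omega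
    have hT : ∑ i : Fin d, ε i.succ * 2^(i:ℕ) = 0 := by omega
    have := ih (fun i => ε i.succ) (fun i => hε i.succ) hT
    funext i
    refine Fin.cases h0 (fun j => ?_) i
    exact congrFun this j

/-- modular construction (Klarner / van Lint): if
`gcd(n, (2^d - 1)!) = 1` then there are `n^(d-1)` mutually non-attacking queens
on the `(n,d)`-board. -/
theorem modular_construction (n d : ℕ) (hn : 1 ≤ n) (hd : 1 ≤ d)
    (hgcd : Nat.gcd n (Nat.factorial (2 ^ d - 1)) = 1) :
    ∃ Q : Finset (Fin d → ℤ), Q.card = n ^ (d - 1) ∧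
      (∀ q ∈ Q, onBoard n d q) ∧ nonAttacking (Q : Set (Fin d → ℤ)) := by
  obtain ⟨e, rfl⟩ : ∃ e, d = e + 1 := ⟨d - 1, by omega⟩
  haveI : NeZero n := ⟨by omega⟩
  have h1e : (1:ℕ) ≤ 2^e := Nat.one_le_two_pow
  have hcop2e : Nat.Coprime (2^e) n := by
    have hdvd : 2^e ∣ Nat.factorial (2^(e+1) - 1) := by
      refine Nat.dvd_factorial (Nat.pow_pos (by norm_num)) ?_
      have : (2:ℕ)^(e+1) = 2 * 2^e := by ring
      omega
    exact (Nat.Coprime.coprime_dvd_right hdvd hgcd).symm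
  set u : ZMod n := ((2^e : ℕ) : ZMod n) with hu_def
  have hu : u * u⁻¹ = 1 := ZMod.coe_mul_inv_eq_one _ hcop2e
  set S : (Fin e → Fin n) → ZMod n :=
    fun b => ∑ i : Fin e, (2:ZMod n)^(i:ℕ) * ((((b i : ℕ) : ℤ) + 1 : ℤ) : ZMod n) with hS_def
  set t : (Fin e → Fin n) → ZMod n := fun b => -(u⁻¹ * S b) with ht_def
  set F : (Fin e → Fin n) → (Fin (e+1) → ℤ) :=
    fun b => Fin.snoc (fun i => ((b i : ℕ) : ℤ) + 1) (((t b - 1).val : ℤ) + 1) with hF_def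
  set K : (Fin (e+1) → ℤ) → ZMod n :=
    fun q => ∑ i : Fin (e+1), (2:ZMod n)^(i:ℕ) * ((q i : ℤ) : ZMod n) with hK_def
  have hKF : ∀ b, K (F b) = 0 := by
    intro b
    simp only [hK_def, hF_def]
    rw [Fin.sum_univ_castSucc]
    simp only [Fin.snoc_castSucc, Fin.snoc_last, Fin.coe_castSucc, Fin.val_last]
    have hlast : ((((t b - 1).val : ℤ) + 1 : ℤ) : ZMod n) = t b := by
      push_cast
      rw [ZMod.natCast_val, ZMod.cast_id]
      ring
    rw [hlast]
    have h2e : (2:ZMod n)^e = u := by rw [hu_def]; push_cast; ring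
    rw [h2e]
    have hsum : (∑ i : Fin e, (2:ZMod n)^(i:ℕ) * ((((b i : ℕ) : ℤ) + 1 : ℤ) : ZMod n)) = S b := rfl
    rw [hsum, ht_def]
    rw [show u * -(u⁻¹ * S b) = -((u * u⁻¹) * S b) by ring, hu, one_mul]
    ring
  have hinj : Function.Injective F := by
    intro b b' h
    funext i
    have h1 := congrFun h (Fin.castSucc i)
    simp only [hF_def, Fin.snoc_castSucc] at h1
    have : ((b i : ℕ) : ℤ) = ((b' i : ℕ) : ℤ) := by omega
    exact Fin.ext (by exact_mod_cast this)
  have hboard : ∀ b, onBoard n (e+1) (F b) := by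
    intro b i
    refine Fin.lastCases ?_ (fun j => ?_) i
    · simp only [hF_def, Fin.snoc_last]
      have hv : (t b - 1).val < n := ZMod.val_lt _
      omega
    · simp only [hF_def, Fin.snoc_castSucc]
      have := (b j).isLt
      omega
  refine ⟨Finset.univ.image F, ?_, ?_, ?_⟩
  · rw [Finset.card_image_of_injective _ hinj]
    simp
  · intro q hq
    obtain ⟨b, _, rfl⟩ := Finset.mem_image.mp hq
    exact hboard b
  · rintro q1 hq1 q2 hq2 hne ⟨m, ε, hε, hεne, heq⟩
    obtain ⟨b1, _, rfl⟩ := Finset.mem_image.mp (Finset.mem_coe.mp hq1)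
    obtain ⟨b2, _, rfl⟩ := Finset.mem_image.mp (Finset.mem_coe.mp hq2)
    set q1 := F b1
    set q2 := F b2
    set s : ℤ := ∑ i : Fin (e+1), ε i * 2^(i:ℕ) with hs_def
    have hs0 : s ≠ 0 := fun h => hεne (eps_zero ε hε h)
    -- n ∣ m * s
    have hdiff : ∀ i, q1 i - q2 i = ε i * m := fun i => by rw [heq i]; ring
    have hcast : ((m * s : ℤ) : ZMod n) = 0 := by
      have hKK : K q1 - K q2 = ((m * s : ℤ) : ZMod n) := by
        simp only [hK_def, hs_def, ← Finset.sum_sub_distrib]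
        push_cast
        rw [Finset.mul_sum]
        refine Finset.sum_congr rfl fun i _ => ?_
        rw [heq i]
        push_cast
        ring
      rw [hKF b1, hKF b2, sub_zero] at hKK
      exact hKK.symm
    have hdvdms : (n:ℤ) ∣ m * s := (ZMod.intCast_zmod_eq_zero_iff_dvd _ n).mp hcast
    -- |s| ≤ 2^(e+1) - 1
    have habs : |s| ≤ 2^(e+1) - 1 := by
      calc |s| ≤ ∑ i : Fin (e+1), |ε i * 2^(i:ℕ)| := Finset.abs_sum_le_sum_abs _ _
        _ ≤ ∑ i : Fin (e+1), (2:ℤ)^(i:ℕ) := by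
            refine Finset.sum_le_sum fun i _ => ?_
            rcases hε i with h|h|h <;> simp [h, abs_mul]
        _ = 2^(e+1) - 1 := by rw [Fin.sum_univ_eq_sum_range]; exact two_pow_sum _
    have hnatabs : s.natAbs ≤ 2^(e+1) - 1 := by
      have h1 : (s.natAbs : ℤ) ≤ 2^(e+1) - 1 := by rw [← Int.abs_eq_natAbs]; exact habs
      have h2 : ((2^(e+1) - 1 : ℕ) : ℤ) = 2^(e+1) - 1 := by
        push_cast [Nat.one_le_two_pow]
        ring
      omega
    have hcop : IsCoprime (n:ℤ) s := by
      rw [Int.isCoprime_iff_gcd_eq_one]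
      have hdvd : s.natAbs ∣ Nat.factorial (2^(e+1) - 1) :=
        Nat.dvd_factorial (Int.natAbs_pos.mpr hs0) hnatabs
      have := Nat.Coprime.coprime_dvd_right hdvd hgcd
      simpa [Int.gcd, Int.natAbs_natCast] using this
    have hnm : (n:ℤ) ∣ m := hcop.dvd_of_dvd_mul_right hdvdms
    apply hne
    funext i
    have hd1 := hdiff i
    have hb1 := hboard b1 i
    have hb2 := hboard b2 i
    have hdvdi : (n:ℤ) ∣ q1 i - q2 i := by
      rw [hd1]
      exact Dvd.dvd.mul_left hnm (ε i)
    obtain ⟨k, hk⟩ := hdvdi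
    have hk0 : k = 0 := by nlinarith [hb1.1, hb1.2, hb2.1, hb2.2]
    have : q1 i - q2 i = 0 := by rw [hk, hk0]; ring
    omega
end

section
/- If gcd(n, 2^d - 1) > 1 is not required but n < 2^d, then combining the bounds: for every d ≥ 2, |Q_max(4,d)| ≤ 2^d. -/
/-!
Reducing coordinates modulo `k` sends the `(2k,d)`-board onto `(ℤ/k)^d`, a set of `k^d` classes.
Two distinct queens in the same class differ in every coordinate by an element of `{-k, 0, k}`
(a difference of two numbers in `[1, 2k]` has absolute value below `2k`), so they attack each other
with step `m = k`. Hence a non-attacking set meets each class at most once; `k = 2` gives the theorem.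
-/

lemma exists_sign_mul_add_of_modEq {k a b : ℤ} (hk : 0 < k) (ha : 1 ≤ a ∧ a ≤ 2 * k)
    (hb : 1 ≤ b ∧ b ≤ 2 * k) (hab : a ≡ b [ZMOD k]) :
    ∃ e : ℤ, (e = -1 ∨ e = 0 ∨ e = 1) ∧ a = e * k + b := by
  obtain ⟨c, hc⟩ := hab.symm.dvd
  have hlt : k * c < k * 2 := by linarith
  have hgt : k * (-2) < k * c := by linarith
  have hc_lt : c < 2 := lt_of_mul_lt_mul_left hlt hk.le
  have hc_gt : -2 < c := lt_of_mul_lt_mul_left hgt hk.le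
  exact ⟨c, by omega, by linarith⟩

lemma attacks_of_modEq {k d : ℕ} (hk : 0 < k) {q1 q2 : Fin d → ℤ}
    (h1 : onBoard (2 * k) d q1) (h2 : onBoard (2 * k) d q2) (hne : q1 ≠ q2)
    (hmod : ∀ i, q1 i ≡ q2 i [ZMOD k]) : attacks q1 q2 := by
  have hstep : ∀ i, ∃ e : ℤ, (e = -1 ∨ e = 0 ∨ e = 1) ∧ q1 i = e * k + q2 i := fun i =>
    exists_sign_mul_add_of_modEq (by exact_mod_cast hk) (by exact_mod_cast h1 i)
      (by exact_mod_cast h2 i) (hmod i)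
  choose ε hε hq using hstep
  refine ⟨k, ε, hε, fun hε0 => hne (funext fun i => ?_), hq⟩
  simpa [hε0] using hq i

theorem maxQueens_two_mul_le_pow (k d : ℕ) [NeZero k] : maxQueens (2 * k) d ≤ k ^ d := by
  refine csSup_le ⟨0, ∅, by simp [nonAttacking]⟩ ?_
  rintro _ ⟨Q, rfl, hboard, hQ⟩
  have hinj : Set.InjOn (fun (q : Fin d → ℤ) (i : Fin d) => (q i : ZMod k)) Q := by
    intro q1 h1 q2 h2 hres
    by_contra hne
    refine hQ q1 h1 q2 h2 hne (attacks_of_modEq (NeZero.pos k) (hboard q1 h1) (hboard q2 h2)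
      hne fun i => ?_)
    exact (ZMod.intCast_eq_intCast_iff _ _ k).mp (congrFun hres i)
  calc Q.card ≤ Fintype.card (Fin d → ZMod k) :=
        Finset.card_le_card_of_injOn _ (fun _ _ => Finset.mem_univ _) hinj
    _ = k ^ d := by simp

theorem maxQueens_four_bound_general (d : ℕ) : maxQueens 4 d ≤ 2 ^ d :=
  maxQueens_two_mul_le_pow 2 d

/-- `|Q_max(4,d)| ≤ 2^d` for all `d ≥ 2`. -/
theorem maxQueens_four_bound (d : ℕ) (hd : 2 ≤ d) : maxQueens 4 d ≤ 2 ^ d :=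
  maxQueens_four_bound_general d
end
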